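/- Smallness of the boundary-layer function in the coarse region: let β > 0, σ₀ ≥ 4/√β, ε ∈ (0,1], and let N ≥ 4 be an integer and L a real number with 0 < L ≤ ln N and e^{−L} ≤ L/N; set τ = σ₀√ε L and assume τ ≤ 1/4. Then there exists a constant C, independent of ε, N, and L (for example C = e^{16/e}), such that exp( −τ(1 − 4/N)·√(β/ε) ) ≤ C (L/N)⁴. Consequently, B_ε(x) = exp(−x√(β/ε)) + exp(−(1−x)√(β/ε)) satisfies B_ε(x) ≤ 2C(L/N)⁴ for all x ∈ [τ(1 − 4/N), 1 − τ(1 − 4/N)]. -/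
import Mathlib


/-- The boundary-layer function `B_ε(x) = e^{-x√(β/ε)} + e^{-(1-x)√(β/ε)}`. -/
noncomputable def Bfun (β ε x : ℝ) : ℝ :=
  Real.exp (-x * Real.sqrt (β/ε)) + Real.exp (-(1-x) * Real.sqrt (β/ε))

lemma log_le_div_e {x : ℝ} (hx : 0 < x) : Real.log x ≤ x / Real.exp 1 := by
  have he : (0:ℝ) < Real.exp 1 := Real.exp_pos 1
  have h := Real.log_le_sub_one_of_pos (div_pos hx he)
  rw [Real.log_div (ne_of_gt hx) (ne_of_gt he), Real.log_exp] at h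
  linarith

/-- Smallness of the boundary-layer function in the coarse region:
with `τ = σ₀√ε L`, `exp(−τ(1−4/N)√(β/ε)) ≤ C (L/N)⁴`, hence
`B_ε(x) ≤ 2C (L/N)⁴` for all `x ∈ [τ(1−4/N), 1−τ(1−4/N)]`, with `C`
independent of `ε`, `N` and `L` (e.g. `C = e^{16/e}`). -/
theorem stmt_16
    (β σ₀ : ℝ) (hβ : 0 < β) (hσ₀ : 4 / Real.sqrt β ≤ σ₀) :
    ∃ C : ℝ, ∀ ε ∈ Set.Ioc (0:ℝ) 1, ∀ N : ℕ, 4 ≤ N →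
      ∀ L : ℝ, 0 < L → L ≤ Real.log N → Real.exp (-L) ≤ L / N →
      σ₀ * Real.sqrt ε * L ≤ 1/4 →
      Real.exp (-(σ₀ * Real.sqrt ε * L * (1 - 4/(N:ℝ))) * Real.sqrt (β/ε))
          ≤ C * (L/N)^4 ∧
      ∀ x ∈ Set.Icc (σ₀ * Real.sqrt ε * L * (1 - 4/(N:ℝ)))
          (1 - σ₀ * Real.sqrt ε * L * (1 - 4/(N:ℝ))),
        Bfun β ε x ≤ 2 * C * (L/N)^4 := by
  refine ⟨Real.exp (16 / Real.exp 1), ?_⟩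
  rintro ε ⟨hε0, hε1⟩ N hN L hL hLlog hexpL hτ
  set n : ℝ := (N : ℝ) with hn
  have hn4 : (4:ℝ) ≤ n := by rw [hn]; exact_mod_cast hN
  have hn0 : (0:ℝ) < n := by linarith
  have h4n : 0 ≤ 1 - 4 / n := by
    rw [sub_nonneg, div_le_one hn0]; linarith
  have hsβ : 0 < Real.sqrt β := Real.sqrt_pos.2 hβ
  have hσβ : 4 ≤ σ₀ * Real.sqrt β := by
    have := (div_le_iff₀ hsβ).1 hσ₀
    linarith
  have hσ0 : 0 < σ₀ := lt_of_lt_of_le (by positivity) hσ₀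
  have hsε : 0 < Real.sqrt ε := Real.sqrt_pos.2 hε0
  have hmul : Real.sqrt ε * Real.sqrt (β/ε) = Real.sqrt β := by
    rw [← Real.sqrt_mul (le_of_lt hε0)]
    congr 1
    field_simp
  -- exponent rewriting
  have hexpo : -(σ₀ * Real.sqrt ε * L * (1 - 4/n)) * Real.sqrt (β/ε)
      = -(σ₀ * Real.sqrt β * L * (1 - 4/n)) := by
    rw [← hmul]; ring
  have hLe : L / n ≤ 1 / Real.exp 1 := by
    have h1 : Real.log n ≤ n / Real.exp 1 := log_le_div_e hn0
    have : L ≤ n / Real.exp 1 := le_trans hLlog h1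
    rw [div_le_div_iff₀ hn0 (Real.exp_pos 1)]
    calc L * Real.exp 1 ≤ (n / Real.exp 1) * Real.exp 1 := by
          apply mul_le_mul_of_nonneg_right this (Real.exp_pos 1).le
      _ = 1 * n := by field_simp
  have hLn0 : 0 < L / n := div_pos hL hn0
  have key : Real.exp (-(σ₀ * Real.sqrt ε * L * (1 - 4/n)) * Real.sqrt (β/ε))
      ≤ Real.exp (16 / Real.exp 1) * (L/n)^4 := by
    rw [hexpo]
    have h1 : -(σ₀ * Real.sqrt β * L * (1 - 4/n)) ≤ -(4 * L * (1 - 4/n)) := by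
      have : 4 * (L * (1 - 4/n)) ≤ (σ₀ * Real.sqrt β) * (L * (1 - 4/n)) :=
        mul_le_mul_of_nonneg_right hσβ (by positivity)
      nlinarith
    calc Real.exp (-(σ₀ * Real.sqrt β * L * (1 - 4/n)))
        ≤ Real.exp (-(4 * L * (1 - 4/n))) := Real.exp_le_exp.2 h1
      _ = Real.exp (4 * L * (4/n)) * Real.exp (-L) ^ 4 := by
          rw [← Real.exp_nat_mul, ← Real.exp_add]; ring_nf
      _ ≤ Real.exp (16 / Real.exp 1) * (L/n)^4 := by
          apply mul_le_mul
          · apply Real.exp_le_exp.2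
            have : 4 * L * (4/n) = 16 * (L/n) := by ring
            rw [this]
            calc 16 * (L/n) ≤ 16 * (1 / Real.exp 1) := by
                  apply mul_le_mul_of_nonneg_left hLe (by norm_num)
              _ = 16 / Real.exp 1 := by ring
          · exact pow_le_pow_left₀ (Real.exp_pos _).le hexpL 4
          · positivity
          · positivity
  refine ⟨key, ?_⟩
  rintro x ⟨hx1, hx2⟩
  have hs : 0 ≤ Real.sqrt (β/ε) := Real.sqrt_nonneg _
  have b1 : Real.exp (-x * Real.sqrt (β/ε))
      ≤ Real.exp (-(σ₀ * Real.sqrt ε * L * (1 - 4/n)) * Real.sqrt (β/ε)) := by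
    apply Real.exp_le_exp.2
    apply mul_le_mul_of_nonneg_right _ hs
    linarith
  have b2 : Real.exp (-(1-x) * Real.sqrt (β/ε))
      ≤ Real.exp (-(σ₀ * Real.sqrt ε * L * (1 - 4/n)) * Real.sqrt (β/ε)) := by
    apply Real.exp_le_exp.2
    apply mul_le_mul_of_nonneg_right _ hs
    linarith
  have := add_le_add b1 b2
  unfold Bfun
  linarith
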